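/- arXiv:2410.05529 — 7 statements merged into one kernel-verified Lean document; each statement's English description precedes it below -/
import Mathlib

section
/- Let (Ω, μ) be a probability space, let U be a character on L^∞(Ω, μ; ℂ), and let f ∈ L^∞(Ω, μ; ℂ). Then for every ε > 0 there exists a measurable set A ⊆ Ω such that U(1_A) = 1 and ‖1_A · f − U(f) · 1_A‖_{L^∞} ≤ ε, where 1_A denotes the equivalence class of the indicator function of A in L^∞(Ω, μ; ℂ). -/
/-!
Put `u = f - U(f) • 1` and `A = {|u| ≤ ε}`. Off `A` we have `|u| > ε`, so `u` is invertible there: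
`1 - 1_A = v • u` with `v = 1_{Aᶜ} / u`, which is bounded by `1 / ε`. Applying the character gives
`1 - U(1_A) = U(v) U(u) = 0`, since `U(u) = U(f) - U(f) U(1) = 0`. On `A` itself,
`1_A • f - U(f) • 1_A = 1_A • u` has sup norm at most `ε`.
-/

open MeasureTheory Metric
open scoped ENNReal

namespace MeasureTheory

variable {Ω : Type*} [MeasurableSpace Ω] {μ : Measure Ω} {𝕜 : Type*} [RCLike 𝕜]

theorem memLp_top_indicator_inv {u : Ω → 𝕜} (hu : StronglyMeasurable u) {s : Set Ω}
    (hs : MeasurableSet s) {ε : ℝ} (hε : 0 < ε) (hus : ∀ ω ∈ s, ε ≤ ‖u ω‖) :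
    MemLp (s.indicator fun ω => (u ω)⁻¹) ∞ μ := by
  refine memLp_top_of_bound ((hu.measurable.inv.indicator hs).aestronglyMeasurable) ε⁻¹
    (Filter.Eventually.of_forall fun ω => ?_)
  by_cases hω : ω ∈ s
  · simpa [hω] using inv_anti₀ hε (hus ω hω)
  · simpa [hω] using hε.le

namespace Lp

theorem coe_lpSMul {R : Type*} [NormedRing R] {p q r : ℝ≥0∞} [ENNReal.HolderTriple p q r]
    (f : Lp R p μ) (g : Lp R q μ) :
    ((f • g : Lp R r μ) : Ω →ₘ[μ] R) = (f : Ω →ₘ[μ] R) * (g : Ω →ₘ[μ] R) := by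
  apply AEEqFun.ext
  filter_upwards [coeFn_lpSMul (r := r) f g, AEEqFun.coeFn_mul (f : Ω →ₘ[μ] R) g] with ω h₁ h₂
  exact h₁.trans h₂.symm

theorem lpSMul_const_one {R : Type*} [NormedRing R] [IsFiniteMeasure μ] {p : ℝ≥0∞}
    (f : Lp R p μ) : (f • Lp.const ∞ μ (1 : R) : Lp R p μ) = f := by
  ext1
  filter_upwards [coeFn_lpSMul (r := p) f (Lp.const ∞ μ (1 : R)), Lp.coeFn_const ∞ μ (1 : R)]
    with ω h₁ h₂
  rw [h₁, Pi.smul_apply', h₂, Function.const_apply, smul_eq_mul, mul_one]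

theorem norm_indicatorConstLp_one_lpSMul_le {u : Lp 𝕜 ∞ μ} {A : Set Ω} (hA : MeasurableSet A)
    (hμA : μ A ≠ ∞) {ε : ℝ} (hε : 0 ≤ ε) (hu : ∀ ω ∈ A, ‖u ω‖ ≤ ε) :
    ‖(indicatorConstLp ∞ hA hμA (1 : 𝕜) • u : Lp 𝕜 ∞ μ)‖ ≤ ε := by
  rw [norm_def, eLpNorm_exponent_top]
  refine ENNReal.toReal_le_of_le_ofReal hε (eLpNormEssSup_le_of_ae_bound ?_)
  filter_upwards [coeFn_lpSMul (r := ∞) (indicatorConstLp ∞ hA hμA (1 : 𝕜)) u,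
    indicatorConstLp_coeFn (p := ∞) (hs := hA) (hμs := hμA) (c := (1 : 𝕜))] with ω h₁ h₂
  rw [h₁, Pi.smul_apply', h₂]
  by_cases hω : ω ∈ A
  · simpa [hω] using hu ω hω
  · simpa [hω] using hε

theorem exists_lpSMul_eq_const_one_sub_indicatorConstLp [IsFiniteMeasure μ] {u : Lp 𝕜 ∞ μ}
    {A : Set Ω} (hA : MeasurableSet A) {ε : ℝ} (hε : 0 < ε) (hu : ∀ ω ∉ A, ε ≤ ‖u ω‖) :
    ∃ v : Lp 𝕜 ∞ μ, (v • u : Lp 𝕜 ∞ μ) =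
      Lp.const ∞ μ 1 - indicatorConstLp ∞ hA (measure_ne_top μ A) 1 := by
  have hv := memLp_top_indicator_inv (μ := μ) (Lp.stronglyMeasurable u) hA.compl hε hu
  refine ⟨hv.toLp _, ?_⟩
  ext1
  filter_upwards [coeFn_lpSMul (r := ∞) (hv.toLp _) u, hv.coeFn_toLp,
    Lp.coeFn_sub (Lp.const ∞ μ (1 : 𝕜)) (indicatorConstLp ∞ hA (measure_ne_top μ A) 1),
    Lp.coeFn_const ∞ μ (1 : 𝕜),
    indicatorConstLp_coeFn (p := ∞) (hs := hA) (hμs := measure_ne_top μ A) (c := (1 : 𝕜))]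
    with ω h₁ h₂ h₃ h₄ h₅
  rw [h₁, Pi.smul_apply', h₂, h₃, Pi.sub_apply, h₄, h₅]
  by_cases hω : ω ∈ A
  · simp [hω]
  · have hu₀ : u ω ≠ 0 := norm_pos_iff.mp (hε.trans_le (hu ω hω))
    simp [hω, hu₀]

end Lp

end MeasureTheory

/-- Let `(Ω, μ)` be a probability space, let `U` be a character on
`L^∞(Ω, μ; ℂ)` (i.e. a continuous, unital, multiplicative linear functional), and let
`f ∈ L^∞(Ω, μ; ℂ)`.  Then for every `ε > 0` there exists a measurable set `A ⊆ Ω` such that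
`U(1_A) = 1` and `‖1_A · f − U(f) · 1_A‖_{L^∞} ≤ ε`.  Multiplication in `L^∞` is expressed
through the multiplication of the underlying a.e.-equivalence classes of functions. -/
theorem character_indicator_localization
    {Ω : Type*} [MeasurableSpace Ω] (μ : Measure Ω) [IsProbabilityMeasure μ]
    (U : Lp ℂ ∞ μ →L[ℂ] ℂ)
    (hU1 : U (Lp.const ∞ μ (1 : ℂ)) = 1)
    (hUmul : ∀ f g h : Lp ℂ ∞ μ,
      (h : Ω →ₘ[μ] ℂ) = (f : Ω →ₘ[μ] ℂ) * (g : Ω →ₘ[μ] ℂ) → U h = U f * U g)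
    (f : Lp ℂ ∞ μ) (ε : ℝ) (hε : 0 < ε) :
    ∃ (A : Set Ω) (hA : MeasurableSet A),
      U (indicatorConstLp ∞ hA (measure_ne_top μ A) (1 : ℂ)) = 1 ∧
      ∃ pf : Lp ℂ ∞ μ,
        (pf : Ω →ₘ[μ] ℂ) =
          (indicatorConstLp ∞ hA (measure_ne_top μ A) (1 : ℂ) : Ω →ₘ[μ] ℂ) * (f : Ω →ₘ[μ] ℂ) ∧
        ‖pf - U f • indicatorConstLp ∞ hA (measure_ne_top μ A) (1 : ℂ)‖ ≤ ε := by
  have hU_lpSMul (a b : Lp ℂ ∞ μ) : U (a • b : Lp ℂ ∞ μ) = U a * U b :=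
    hUmul a b _ (Lp.coe_lpSMul a b)
  set u : Lp ℂ ∞ μ := f - U f • Lp.const ∞ μ 1
  have hUu : U u = 0 := by simp [u, hU1]
  set A := u ⁻¹' closedBall 0 ε
  have hA : MeasurableSet A := (Lp.stronglyMeasurable u).measurable measurableSet_closedBall
  set χ := indicatorConstLp ∞ hA (measure_ne_top μ A) (1 : ℂ)
  have hUχ : U χ = 1 := by
    obtain ⟨v, hv⟩ := Lp.exists_lpSMul_eq_const_one_sub_indicatorConstLp (u := u) hA hε
      fun ω hω => (not_le.mp (by simpa [A] using hω)).le
    have h := congrArg U hv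
    rw [hU_lpSMul, hUu, mul_zero, map_sub, hU1] at h
    exact (sub_eq_zero.mp h.symm).symm
  refine ⟨A, hA, hUχ, χ • f, Lp.coe_lpSMul χ f, ?_⟩
  have hχu : (χ • u : Lp ℂ ∞ μ) = χ • f - U f • χ := by
    simp only [u, sub_eq_add_neg, Lp.add_smul, Lp.smul_neg, ← Lp.smul_comm, Lp.lpSMul_const_one]
  rw [← hχu]
  exact Lp.norm_indicatorConstLp_one_lpSMul_le hA _ hε.le fun ω hω => by simpa [A] using hω
end

section
/- Let X be a compact Hausdorff topological space, I a nonempty index set, (z_i)_{i∈I} a family of real-valued continuous functions on X, and z ∈ C(X, ℝ) a least upper bound of {z_i : i ∈ I} in the pointwise partial order on C(X, ℝ). Then for every ε > 0 the set {t ∈ X : z(t) < sup_{i∈I} z_i(t) + ε} is open and dense in X, and consequently the set {t ∈ X : z(t) = sup_{i∈I} z_i(t)} is dense in X. -/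
/-- Let `X` be a compact Hausdorff space, `I` a nonempty index set,
`(z_i)` a family in `C(X, ℝ)` and `z` a least upper bound of the family in the pointwise
order on `C(X, ℝ)`.  Then for every `ε > 0` the set `{t | z t < (⨆ i, z_i t) + ε}` is open and
dense, and consequently `{t | z t = ⨆ i, z_i t}` is dense. -/
theorem lub_pointwise_sup_dense
    {X : Type*} [TopologicalSpace X] [CompactSpace X] [T2Space X]
    {I : Type*} [Nonempty I] (zi : I → C(X, ℝ)) (z : C(X, ℝ))
    (hub : ∀ i, zi i ≤ z)
    (hlub : ∀ w : C(X, ℝ), (∀ i, zi i ≤ w) → z ≤ w) :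
    (∀ ε : ℝ, 0 < ε →
      IsOpen {t : X | z t < (⨆ i, zi i t) + ε} ∧ Dense {t : X | z t < (⨆ i, zi i t) + ε}) ∧
    Dense {t : X | z t = ⨆ i, zi i t} := by
  have bdd : ∀ t : X, BddAbove (Set.range fun i => zi i t) := by
    intro t
    exact ⟨z t, by rintro _ ⟨i, rfl⟩; exact hub i t⟩
  have hsz : ∀ t : X, (⨆ i, zi i t) ≤ z t := fun t => ciSup_le fun i => hub i t
  have main : ∀ ε : ℝ, 0 < ε →
      IsOpen {t : X | z t < (⨆ i, zi i t) + ε} ∧ Dense {t : X | z t < (⨆ i, zi i t) + ε} := by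
    intro ε hε
    have hset : {t : X | z t < (⨆ i, zi i t) + ε} = ⋃ i, {t : X | z t < zi i t + ε} := by
      ext t
      simp only [Set.mem_setOf_eq, Set.mem_iUnion]
      constructor
      · intro h
        have h' : z t - ε < ⨆ i, zi i t := by linarith
        obtain ⟨i, hi⟩ := (lt_ciSup_iff (bdd t)).1 h'
        exact ⟨i, by linarith⟩
      · rintro ⟨i, hi⟩
        have := le_ciSup (bdd t) i
        linarith
    constructor
    · rw [hset]
      exact isOpen_iUnion fun i =>
        isOpen_lt z.continuous (by continuity : Continuous fun t => zi i t + ε)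
    · rw [dense_iff_inter_open]
      intro U hU hUne
      by_contra hempty
      rw [Set.not_nonempty_iff_eq_empty] at hempty
      have hle : ∀ t ∈ U, (⨆ i, zi i t) + ε ≤ z t := by
        intro t ht
        by_contra hlt
        push_neg at hlt
        exact Set.eq_empty_iff_forall_notMem.1 hempty t ⟨ht, hlt⟩
      obtain ⟨t0, ht0⟩ := hUne
      obtain ⟨f, hf0, hf1, hf01⟩ := exists_continuous_zero_one_of_isClosed
        (isClosed_compl_iff.2 hU) (isClosed_singleton (x := t0))
        (by simp [Set.disjoint_singleton_right, ht0])
      set w : C(X, ℝ) := z - ε • f with hw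
      have hzw : ∀ i, zi i ≤ w := by
        intro i t
        show zi i t ≤ w t
        have hft : f t ∈ Set.Icc (0:ℝ) 1 := hf01 t
        have hwt : w t = z t - ε * f t := by simp [hw]
        by_cases ht : t ∈ U
        · have h1 : zi i t ≤ ⨆ j, zi j t := le_ciSup (bdd t) i
          have h2 := hle t ht
          have h3 : ε * f t ≤ ε := by nlinarith [hft.2]
          rw [hwt]; linarith
        · have : f t = 0 := hf0 ht
          rw [hwt, this]; simpa using hub i t
      have h4 : z t0 ≤ w t0 := hlub w hzw t0
      have hft0 : f t0 = 1 := hf1 rfl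
      have hwt0 : w t0 = z t0 - ε * 1 := by simp [hw, hft0]
      rw [hwt0] at h4
      linarith
  refine ⟨main, ?_⟩
  have hD : Dense (⋂ n : ℕ, {t : X | z t < (⨆ i, zi i t) + 1 / (n + 1)}) := by
    apply dense_iInter_of_isOpen
    · intro n; exact (main (1 / (n + 1)) (by positivity)).1
    · intro n; exact (main (1 / (n + 1)) (by positivity)).2
  refine hD.mono ?_
  intro t ht
  simp only [Set.mem_iInter, Set.mem_setOf_eq] at ht ⊢
  have hle : z t ≤ ⨆ i, zi i t := by
    by_contra h
    push_neg at h
    obtain ⟨n, hn⟩ := exists_nat_one_div_lt (by linarith : (0:ℝ) < z t - (⨆ i, zi i t))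
    have := ht n
    linarith
  exact le_antisymm hle (hsz t)
end

section
/- Let I be a set and let B denote the commutative unital Banach algebra of bounded functions I → ℂ with the supremum norm and pointwise operations. (a) For every ultrafilter U on I and every f ∈ B there is a unique complex number λ_U(f) such that f tends to λ_U(f) along U. (b) For every ultrafilter U on I, the map f ↦ λ_U(f) is a unital ℂ-algebra homomorphism B → ℂ. (c) The map U ↦ λ_U is a bijection from the set of ultrafilters on I onto the set of unital ℂ-algebra homomorphisms B → ℂ. -/
open Filter Topology BoundedContinuousFunction

/-!
Along an ultrafilter, a bounded function into a proper space converges, since the closure of its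
range is compact; limits respect the ring operations, so they form a character.

Conversely, a character `ψ` takes the value `0` or `1` on the indicator `1_s` of each set (an
idempotent), and `{s | ψ 1_s = 1}` is an ultrafilter. Given `ε > 0`, the function `f - ψ f` is
bounded away from `0` on the set `s` where `‖f - ψ f‖ ≥ ε`, so `1_s` is a multiple of `f - ψ f` in
the algebra and `ψ 1_s = 0`: hence `f` tends to `ψ f` along this ultrafilter. It is the only such
ultrafilter, because `1_s` tends to `1` or to `0` along an ultrafilter according as `s` belongs to
it or not.
-/

namespace BoundedContinuousFunction

variable {α : Type*} [TopologicalSpace α]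

theorem exists_tendsto_ultrafilter {β : Type*} [PseudoMetricSpace β] [ProperSpace β]
    (U : Ultrafilter α) (f : α →ᵇ β) : ∃ l, Tendsto f U (𝓝 l) := by
  obtain ⟨l, -, hl⟩ := (isBounded_range f).isCompact_closure.ultrafilter_le_nhds (U.map f)
    (le_principal_iff.2 <| Ultrafilter.mem_map.2 <| univ_mem' fun i ↦ subset_closure ⟨i, rfl⟩)
  exact ⟨l, hl⟩

section UltrafilterLim

variable (𝕜 : Type*) {γ : Type*} [NormedField 𝕜] [NormedRing γ] [NormedAlgebra 𝕜 γ]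
  [ProperSpace γ]

theorem tendsto_limUnder_ultrafilter (U : Ultrafilter α) (f : α →ᵇ γ) :
    Tendsto f U (𝓝 (limUnder (U : Filter α) f)) :=
  tendsto_nhds_limUnder (exists_tendsto_ultrafilter U f)

noncomputable def ultrafilterLim (U : Ultrafilter α) : (α →ᵇ γ) →ₐ[𝕜] γ where
  toFun f := limUnder (U : Filter α) f
  map_one' := (tendsto_const_nhds (x := (1 : γ))).limUnder_eq
  map_mul' f g :=
    ((tendsto_limUnder_ultrafilter U f).mul (tendsto_limUnder_ultrafilter U g)).limUnder_eq
  map_zero' := (tendsto_const_nhds (x := (0 : γ))).limUnder_eq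
  map_add' f g :=
    ((tendsto_limUnder_ultrafilter U f).add (tendsto_limUnder_ultrafilter U g)).limUnder_eq
  commutes' c := (tendsto_const_nhds (x := algebraMap 𝕜 γ c)).limUnder_eq

theorem tendsto_ultrafilterLim (U : Ultrafilter α) (f : α →ᵇ γ) :
    Tendsto f U (𝓝 (ultrafilterLim 𝕜 U f)) :=
  tendsto_limUnder_ultrafilter U f

end UltrafilterLim

section Indicator

variable [DiscreteTopology α] {R : Type*} [NormedRing R] [NormOneClass R]

noncomputable def indicatorOne (s : Set α) : α →ᵇ R :=
  ofNormedAddCommGroupDiscrete (s.indicator 1) 1 fun i ↦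
    (norm_indicator_le_norm_self 1 i).trans norm_one.le

@[simp]
theorem coe_indicatorOne (s : Set α) : ⇑(indicatorOne s : α →ᵇ R) = s.indicator 1 := rfl

theorem indicatorOne_inter (s t : Set α) :
    (indicatorOne (s ∩ t) : α →ᵇ R) = indicatorOne s * indicatorOne t :=
  DFunLike.coe_injective (Set.inter_indicator_one (M₀ := R))

theorem indicatorOne_univ : (indicatorOne Set.univ : α →ᵇ R) = 1 :=
  DFunLike.coe_injective (Set.indicator_univ 1)

theorem indicatorOne_add_compl (s : Set α) :
    (indicatorOne s : α →ᵇ R) + indicatorOne sᶜ = 1 :=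
  DFunLike.coe_injective (s.indicator_self_add_compl (1 : α → R))

end Indicator

end BoundedContinuousFunction

theorem Ultrafilter.mem_iff_tendsto_indicator_one {α M : Type*} [Zero M] [One M] [NeZero (1 : M)]
    [TopologicalSpace M] [T2Space M] (U : Ultrafilter α) (s : Set α) :
    s ∈ U ↔ Tendsto (s.indicator (1 : α → M)) U (𝓝 1) := by
  refine ⟨fun hs ↦ tendsto_const_nhds.congr' ?_, fun h ↦ ?_⟩
  · filter_upwards [hs] with i hi using (Set.indicator_of_mem hi 1).symm
  · by_contra hs
    have h₀ : Tendsto (s.indicator (1 : α → M)) U (𝓝 0) := by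
      refine tendsto_const_nhds.congr' ?_
      filter_upwards [U.compl_mem_iff_notMem.2 hs] with i hi
      exact (Set.indicator_of_notMem hi 1).symm
    exact one_ne_zero (tendsto_nhds_unique h h₀)

namespace AlgHom

variable {α 𝕜 : Type*} [TopologicalSpace α] [DiscreteTopology α] [NormedField 𝕜]
  (ψ : (α →ᵇ 𝕜) →ₐ[𝕜] 𝕜)

theorem apply_indicatorOne_eq_zero_or_one (s : Set α) :
    ψ (indicatorOne s) = 0 ∨ ψ (indicatorOne s) = 1 := by
  refine IsIdempotentElem.iff_eq_zero_or_one.1 (IsIdempotentElem.map ?_ ψ)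
  rw [IsIdempotentElem, ← indicatorOne_inter, Set.inter_self]

theorem apply_indicatorOne_add_compl (s : Set α) :
    ψ (indicatorOne s) + ψ (indicatorOne sᶜ) = 1 := by
  rw [← map_add, indicatorOne_add_compl, map_one]

noncomputable def toUltrafilter : Ultrafilter α :=
  Ultrafilter.ofComplNotMemIff
    { sets := {s | ψ (indicatorOne s) = 1}
      univ_sets := by simp [indicatorOne_univ]
      sets_of_superset := by
        intro s t (hs : ψ _ = 1) hst
        have := congrArg ψ (indicatorOne_inter (R := 𝕜) s t)
        rwa [Set.inter_eq_left.2 hst, map_mul, hs, one_mul, eq_comm] at this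
      inter_sets := by
        intro s t (hs : ψ _ = 1) (ht : ψ _ = 1)
        simp [indicatorOne_inter, hs, ht] }
    fun s ↦ by
      have := ψ.apply_indicatorOne_add_compl s
      rcases ψ.apply_indicatorOne_eq_zero_or_one sᶜ with h | h <;>
        simp_all

theorem mem_toUltrafilter {s : Set α} : s ∈ ψ.toUltrafilter ↔ ψ (indicatorOne s) = 1 := Iff.rfl

theorem apply_indicatorOne_eq_zero_of_le_norm {g : α →ᵇ 𝕜} (hg : ψ g = 0) {s : Set α} {ε : ℝ}
    (hε : 0 < ε) (hgs : ∀ i ∈ s, ε ≤ ‖g i‖) : ψ (indicatorOne s) = 0 := by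
  have hbound : ∀ i, ‖s.indicator (fun i ↦ (g i)⁻¹) i‖ ≤ ε⁻¹ := fun i ↦ by
    by_cases hi : i ∈ s
    · simpa [hi] using inv_anti₀ hε (hgs i hi)
    · simp [hi, hε.le]
  let h : α →ᵇ 𝕜 := ofNormedAddCommGroupDiscrete _ _ hbound
  have hhg : h * g = indicatorOne s := by
    ext i
    by_cases hi : i ∈ s
    · simpa [h, hi] using inv_mul_cancel₀ (norm_pos_iff.1 (hε.trans_le (hgs i hi)))
    · simp [h, hi]
  rw [← hhg, map_mul, hg, mul_zero]

theorem tendsto_toUltrafilter (f : α →ᵇ 𝕜) : Tendsto f ψ.toUltrafilter (𝓝 (ψ f)) := by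
  refine Metric.tendsto_nhds.2 fun ε hε ↦ ?_
  set t := {i | dist (f i) (ψ f) < ε}
  have hfar : ψ (indicatorOne tᶜ) = 0 := by
    refine ψ.apply_indicatorOne_eq_zero_of_le_norm (g := f - algebraMap 𝕜 _ (ψ f)) ?_ hε ?_
    · simp
    · intro i hi
      simpa [t, dist_eq_norm] using hi
  exact ψ.mem_toUltrafilter.2 (by simpa [hfar] using ψ.apply_indicatorOne_add_compl t)

theorem mem_iff_of_forall_tendsto {U : Ultrafilter α} (hU : ∀ f : α →ᵇ 𝕜, Tendsto f U (𝓝 (ψ f)))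
    (s : Set α) : s ∈ U ↔ ψ (indicatorOne s) = 1 := by
  rw [U.mem_iff_tendsto_indicator_one (M := 𝕜)]
  exact ⟨fun h ↦ tendsto_nhds_unique (hU _) h, fun h ↦ h ▸ hU (indicatorOne s)⟩

theorem eq_toUltrafilter_of_forall_tendsto {U : Ultrafilter α}
    (hU : ∀ f : α →ᵇ 𝕜, Tendsto f U (𝓝 (ψ f))) : U = ψ.toUltrafilter :=
  Ultrafilter.ext fun s ↦ (ψ.mem_iff_of_forall_tendsto hU s).trans ψ.mem_toUltrafilter.symm

end AlgHom

/-- Let `I` be a set (given the discrete topology, so that the bounded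
continuous functions `I →ᵇ ℂ` are exactly the bounded functions `I → ℂ`, a commutative unital
Banach algebra under the sup norm).
(a) For every ultrafilter `U` on `I` and every bounded `f : I → ℂ` there is a unique `l ∈ ℂ`
such that `f` tends to `l` along `U`.
(b) For every ultrafilter `U`, the map sending `f` to its limit along `U` is a unital
`ℂ`-algebra homomorphism `(I →ᵇ ℂ) →ₐ[ℂ] ℂ`.
(c) This correspondence is a bijection: every unital `ℂ`-algebra homomorphism
`(I →ᵇ ℂ) →ₐ[ℂ] ℂ` arises as the limit functional of a unique ultrafilter on `I`. -/
theorem ultrafilters_biject_with_characters_of_bounded_functions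
    {I : Type*} [TopologicalSpace I] [DiscreteTopology I] :
    (∀ (U : Ultrafilter I) (f : I →ᵇ ℂ), ∃! l : ℂ, Tendsto ⇑f ↑U (𝓝 l)) ∧
    (∀ U : Ultrafilter I, ∃ ψ : (I →ᵇ ℂ) →ₐ[ℂ] ℂ,
      ∀ f : I →ᵇ ℂ, Tendsto ⇑f ↑U (𝓝 (ψ f))) ∧
    (∀ ψ : (I →ᵇ ℂ) →ₐ[ℂ] ℂ, ∃! U : Ultrafilter I,
      ∀ f : I →ᵇ ℂ, Tendsto ⇑f ↑U (𝓝 (ψ f))) := by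
  refine ⟨fun U f ↦ ?_, fun U ↦ ⟨ultrafilterLim ℂ U, tendsto_ultrafilterLim ℂ U⟩, fun ψ ↦ ?_⟩
  · exact (exists_tendsto_ultrafilter U f).imp fun l hl ↦ ⟨hl, fun _ h ↦ tendsto_nhds_unique h hl⟩
  · exact ⟨ψ.toUltrafilter, ψ.tendsto_toUltrafilter,
      fun _ ↦ ψ.eq_toUltrafilter_of_forall_tendsto⟩
end

section
/- Let λ denote Lebesgue measure on [0,1] and let U be a character on L^∞([0,1], λ; ℂ). Then there exists a decreasing sequence (A_n)_{n≥1} of measurable subsets of [0,1] with λ(A_n) → 0 such that U(1_{A_n}) = 1 for every n, where 1_{A_n} denotes the equivalence class of the indicator function of A_n in L^∞([0,1], λ; ℂ). -/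
/-!
A multiplicative functional with `φ 1 = 1` sends every indicator `1_s` (an idempotent) to `0` or
`1`, additively in `s`. For the sublevel sets `{g < t}` of a bounded measurable real function `g`
the value `1` is attained exactly on an up-closed set of thresholds `t`, whose infimum `t₀` is a
point on which the character concentrates: every slab `{t₀ - ε ≤ g < t₀ + ε}` has value `1`.
Taking `g` to be the identity of `[0,1]` and `ε = 1/(n+1)` gives the sets `A_n`.
-/

open MeasureTheory Filter Set
open scoped ENNReal Topology

theorem IsUpperSet.csInf_add_mem {S : Set ℝ} (hS : IsUpperSet S) (hne : S.Nonempty) {ε : ℝ}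
    (hε : 0 < ε) : sInf S + ε ∈ S := by
  obtain ⟨t, htS, ht⟩ := exists_lt_of_csInf_lt hne (lt_add_of_pos_right _ hε)
  exact hS ht.le htS

theorem tendsto_volume_Ico_sub_add_one_div (t : ℝ) :
    Tendsto (fun n : ℕ => volume (Ico (t - 1 / (n + 1)) (t + 1 / (n + 1)))) atTop (𝓝 0) := by
  simp_rw [Real.volume_Ico, add_sub_sub_cancel, ← two_mul]
  simpa only [mul_zero, ENNReal.ofReal_zero] using
    ENNReal.tendsto_ofReal (tendsto_one_div_add_atTop_nhds_zero_nat.const_mul 2)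

namespace MeasureTheory

variable {α : Type*} [MeasurableSpace α] {μ : Measure α}

theorem indicatorConstLp_inter_one {R : Type*} [NormedRing R] {p : ℝ≥0∞} {s t : Set α}
    (hs : MeasurableSet s) (ht : MeasurableSet t) (hμs : μ s ≠ ∞) (hμt : μ t ≠ ∞)
    (hμst : μ (s ∩ t) ≠ ∞) :
    (indicatorConstLp p (hs.inter ht) hμst (1 : R) : α →ₘ[μ] R) =
      (indicatorConstLp p hs hμs (1 : R) : α →ₘ[μ] R) *
        (indicatorConstLp p ht hμt (1 : R) : α →ₘ[μ] R) := by
  refine AEEqFun.ext ?_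
  filter_upwards [indicatorConstLp_coeFn (hs := hs.inter ht) (hμs := hμst) (c := (1 : R)),
    indicatorConstLp_coeFn (hs := hs) (hμs := hμs) (c := (1 : R)),
    indicatorConstLp_coeFn (hs := ht) (hμs := hμt) (c := (1 : R)),
    AEEqFun.coeFn_mul (indicatorConstLp p hs hμs (1 : R) : α →ₘ[μ] R)
      (indicatorConstLp p ht hμt (1 : R) : α →ₘ[μ] R)] with x hst hs' ht' hmul
  rw [hst, hmul, Pi.mul_apply, hs', ht', ← Pi.one_def, inter_indicator_one, Pi.mul_apply]

section IndicatorValue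

variable [IsFiniteMeasure μ] {𝕜 F : Type*} [NormedField 𝕜] [FunLike F (Lp 𝕜 ∞ μ) 𝕜] (φ : F)

/-- `φ (1_s)`, with the junk value `0` on non-measurable sets. -/
noncomputable def indicatorValue (s : Set α) : 𝕜 :=
  open Classical in
  if hs : MeasurableSet s then φ (indicatorConstLp ∞ hs (measure_ne_top μ s) 1) else 0

variable {φ}

theorem indicatorValue_of_measurableSet {s : Set α} (hs : MeasurableSet s) :
    indicatorValue φ s = φ (indicatorConstLp ∞ hs (measure_ne_top μ s) 1) :=
  dif_pos hs

theorem indicatorValue_univ : indicatorValue φ univ = φ (Lp.const ∞ μ 1) := by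
  rw [indicatorValue_of_measurableSet MeasurableSet.univ, indicatorConstLp_univ]

theorem indicatorValue_inter
    (hφ : ∀ f g h : Lp 𝕜 ∞ μ, (h : α →ₘ[μ] 𝕜) = f * g → φ h = φ f * φ g)
    {s t : Set α} (hs : MeasurableSet s) (ht : MeasurableSet t) :
    indicatorValue φ (s ∩ t) = indicatorValue φ s * indicatorValue φ t := by
  rw [indicatorValue_of_measurableSet (hs.inter ht), indicatorValue_of_measurableSet hs,
    indicatorValue_of_measurableSet ht]
  exact hφ _ _ _ (indicatorConstLp_inter_one hs ht _ _ _)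

theorem indicatorValue_eq_zero_or_eq_one
    (hφ : ∀ f g h : Lp 𝕜 ∞ μ, (h : α →ₘ[μ] 𝕜) = f * g → φ h = φ f * φ g)
    {s : Set α} (hs : MeasurableSet s) :
    indicatorValue φ s = 0 ∨ indicatorValue φ s = 1 := by
  have hidem := indicatorValue_inter hφ hs hs
  rw [inter_self] at hidem
  have : indicatorValue φ s * (indicatorValue φ s - 1) = 0 := by
    rw [mul_sub_one, ← hidem, sub_self]
  exact (mul_eq_zero.mp this).imp_right sub_eq_zero.mp

theorem indicatorValue_eq_one_of_subset
    (hφ : ∀ f g h : Lp 𝕜 ∞ μ, (h : α →ₘ[μ] 𝕜) = f * g → φ h = φ f * φ g)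
    {s t : Set α} (hs : MeasurableSet s) (ht : MeasurableSet t) (hst : s ⊆ t)
    (h : indicatorValue φ s = 1) : indicatorValue φ t = 1 := by
  have := indicatorValue_inter hφ hs ht
  rwa [inter_eq_left.mpr hst, h, one_mul, eq_comm] at this

variable [AddMonoidHomClass F (Lp 𝕜 ∞ μ) 𝕜]

theorem indicatorValue_empty : indicatorValue φ (∅ : Set α) = 0 := by
  rw [indicatorValue_of_measurableSet MeasurableSet.empty, indicatorConstLp_empty, map_zero]

theorem indicatorValue_union {s t : Set α} (hs : MeasurableSet s) (ht : MeasurableSet t)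
    (hst : Disjoint s t) : indicatorValue φ (s ∪ t) = indicatorValue φ s + indicatorValue φ t := by
  rw [indicatorValue_of_measurableSet (hs.union ht), indicatorValue_of_measurableSet hs,
    indicatorValue_of_measurableSet ht, indicatorConstLp_disjoint_union hs ht _ _ hst, map_add]

theorem indicatorValue_diff {s t : Set α} (hs : MeasurableSet s) (ht : MeasurableSet t)
    (hts : t ⊆ s) : indicatorValue φ (s \ t) = indicatorValue φ s - indicatorValue φ t := by
  rw [eq_sub_iff_add_eq, ← indicatorValue_union (hs.diff ht) ht disjoint_sdiff_left,
    sdiff_union_of_subset hts]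

theorem exists_forall_indicatorValue_preimage_Ico_eq_one (hφ1 : φ (Lp.const ∞ μ 1) = 1)
    (hφ : ∀ f g h : Lp 𝕜 ∞ μ, (h : α →ₘ[μ] 𝕜) = f * g → φ h = φ f * φ g)
    {g : α → ℝ} (hg : Measurable g) (hg_below : BddBelow (range g))
    (hg_above : BddAbove (range g)) :
    ∃ t₀, ∀ ε > 0, indicatorValue φ (g ⁻¹' Ico (t₀ - ε) (t₀ + ε)) = 1 := by
  have hmeas (t : ℝ) : MeasurableSet (g ⁻¹' Iio t) := hg measurableSet_Iio
  let S : Set ℝ := {t | indicatorValue φ (g ⁻¹' Iio t) = 1}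
  have hS_upper : IsUpperSet S := fun a b hab ha =>
    indicatorValue_eq_one_of_subset hφ (hmeas a) (hmeas b) (preimage_mono (Iio_subset_Iio hab)) ha
  obtain ⟨a, ha⟩ := hg_below
  obtain ⟨b, hb⟩ := hg_above
  have hS_nonempty : S.Nonempty := by
    have huniv : g ⁻¹' Iio (b + 1) = univ :=
      eq_univ_of_forall fun x => (hb (mem_range_self x)).trans_lt (lt_add_one b)
    exact ⟨b + 1, show indicatorValue φ _ = 1 by rw [huniv, indicatorValue_univ, hφ1]⟩
  have hS_bdd : BddBelow S := ⟨a, fun t ht => le_of_not_gt fun hta => by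
    have hempty : g ⁻¹' Iio t = ∅ :=
      eq_empty_of_forall_notMem fun x hx => (ha (mem_range_self x)).not_gt (hx.trans hta)
    have ht' : indicatorValue φ (g ⁻¹' Iio t) = 1 := ht
    rw [hempty, indicatorValue_empty] at ht'
    exact zero_ne_one ht'⟩
  refine ⟨sInf S, fun ε hε => ?_⟩
  have hslab : Ico (sInf S - ε) (sInf S + ε) = Iio (sInf S + ε) \ Iio (sInf S - ε) := by
    ext x; simp
  have hlow : sInf S - ε ∉ S := notMem_of_lt_csInf (sub_lt_self _ hε) hS_bdd
  rw [hslab, preimage_sdiff, indicatorValue_diff (hmeas _) (hmeas _)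
      (preimage_mono (Iio_subset_Iio (by linarith))), hS_upper.csInf_add_mem hS_nonempty hε,
    (indicatorValue_eq_zero_or_eq_one hφ (hmeas _)).resolve_right hlow, sub_zero]

end IndicatorValue

end MeasureTheory

/-- Let `λ` be Lebesgue measure on `[0,1]` (realized as the canonical
volume measure on the subtype `[0,1] ⊆ ℝ`, a probability measure) and let `U` be a character
on `L^∞([0,1], λ; ℂ)`, i.e. a continuous, unital, multiplicative linear functional.  Then
there is a decreasing sequence `(A_n)` of measurable subsets of `[0,1]` with `λ(A_n) → 0`
such that `U(1_{A_n}) = 1` for every `n`. -/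
theorem character_on_Linfty_unitInterval_countably_incomplete
    (U : Lp ℂ ∞ (volume : Measure ↥(Set.Icc (0:ℝ) 1)) →L[ℂ] ℂ)
    (hU1 : U (Lp.const ∞ (volume : Measure ↥(Set.Icc (0:ℝ) 1)) (1 : ℂ)) = 1)
    (hUmul : ∀ f g h : Lp ℂ ∞ (volume : Measure ↥(Set.Icc (0:ℝ) 1)),
      (h : ↥(Set.Icc (0:ℝ) 1) →ₘ[volume] ℂ) =
        (f : ↥(Set.Icc (0:ℝ) 1) →ₘ[volume] ℂ) * (g : ↥(Set.Icc (0:ℝ) 1) →ₘ[volume] ℂ) →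
        U h = U f * U g) :
    ∃ A : ℕ → Set ↥(Set.Icc (0:ℝ) 1),
      Antitone A ∧
      Tendsto (fun n => volume (A n)) atTop (𝓝 0) ∧
      ∀ n, ∃ hA : MeasurableSet (A n),
        U (indicatorConstLp ∞ hA (measure_ne_top volume (A n)) (1 : ℂ)) = 1 := by
  obtain ⟨t₀, ht₀⟩ := exists_forall_indicatorValue_preimage_Ico_eq_one hU1 hUmul
    measurable_subtype_coe ⟨0, forall_mem_range.2 fun x => x.2.1⟩
    ⟨1, forall_mem_range.2 fun x => x.2.2⟩
  let A (n : ℕ) : Set (Icc (0:ℝ) 1) := (↑) ⁻¹' Ico (t₀ - 1 / (n + 1)) (t₀ + 1 / (n + 1))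
  have hA (n : ℕ) : MeasurableSet (A n) := measurable_subtype_coe measurableSet_Ico
  refine ⟨A, fun m n hmn => ?_, ?_, fun n =>
    ⟨hA n, (indicatorValue_of_measurableSet (hA n)).symm.trans (ht₀ _ Nat.one_div_pos_of_nat)⟩⟩
  · have := Nat.one_div_le_one_div (α := ℝ) hmn
    exact preimage_mono (Ico_subset_Ico (by linarith) (by linarith))
  · refine tendsto_of_tendsto_of_tendsto_of_le_of_le tendsto_const_nhds
      (tendsto_volume_Ico_sub_add_one_div t₀) (fun _ => bot_le) fun n => ?_
    exact (volume_preimage_coe measurableSet_Icc.nullMeasurableSet measurableSet_Ico).trans_le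
      (measure_mono inter_subset_left)
end

section
/- Let μ be a Borel probability measure on ℝ × ℝ, let μ₁ denote its first marginal, and let ν denote the disintegration kernel of μ over μ₁ (so μ = μ₁ ⊗ₘ ν). Assume that ν(x) is atomless for μ₁-a.e. x. Define F : ℝ × ℝ → ℝ by F(x, y) = ν(x)((−∞, y]) and Φ(x, y) = (x, F(x, y)). Then Φ is Borel measurable, the pushforward of μ under Φ equals the product measure μ₁ × Leb_{[0,1]}, and there exists a Borel measurable map Ψ : ℝ × ℝ → ℝ × ℝ of the form Ψ(x, y) = (x, G(x, y)) such that Ψ ∘ Φ = id μ-a.e. and Φ ∘ Ψ = id (μ₁ × Leb_{[0,1]})-a.e. -/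
/-!
Write `F_x` for the distribution function of `ν x` and `Q_x u = inf {y | u ≤ F_x y}` for its
generalized inverse on `(0, 1)`. The Galois connection `Q_x u ≤ y ↔ u ≤ F_x y` shows that `Q_x`
pushes Lebesgue measure on `[0, 1]` forward to `ν x` and that `(x, u) ↦ Q_x u` is jointly
measurable. When `ν x` is atomless, `F_x` is continuous, hence `F_x ∘ Q_x = id` on `(0, 1)`;
transporting this identity along `Q_x` gives `Q_x ∘ F_x = id` `ν x`-a.e. and
`(F_x)_* (ν x) = Leb_{[0,1]}`. Integrating over `μ₁`, using `μ = μ₁ ⊗ₘ ν`, gives the theorem with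
`G (x, u) = Q_x u`.
-/

open MeasureTheory ProbabilityTheory Set Filter Topology

theorem Real.volume_restrict_Icc_Iic {a b c : ℝ} (hc : c ∈ Icc a b) :
    volume.restrict (Icc a b) (Iic c) = ENNReal.ofReal (c - a) := by
  have hinter : Iic c ∩ Icc a b = Icc a c := by
    ext
    simp only [mem_inter_iff, mem_Iic, mem_Icc]
    grind
  rw [Measure.restrict_apply measurableSet_Iic, hinter, Real.volume_Icc]

theorem Real.ae_mem_Ioo_volume_restrict_Icc {a b : ℝ} :
    ∀ᵐ u ∂volume.restrict (Icc a b), u ∈ Ioo a b := by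
  rw [← Measure.restrict_congr_set Ioo_ae_eq_Icc]
  exact ae_restrict_mem measurableSet_Ioo

theorem MeasureTheory.Measure.map_compProd_prodMk_of_ae_map_eq {α β γ : Type*}
    [MeasurableSpace α] [MeasurableSpace β] [MeasurableSpace γ] {ρ : Measure α} [SFinite ρ]
    {κ : Kernel α β} [IsSFiniteKernel κ] {ν : Measure γ} [SFinite ν] {f : α × β → γ}
    (hf : Measurable f) (h : ∀ᵐ x ∂ρ, (κ x).map (fun y => f (x, y)) = ν) :
    (ρ ⊗ₘ κ).map (fun p => (p.1, f p)) = ρ.prod ν := by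
  ext s hs
  have hΦ : Measurable fun p : α × β => (p.1, f p) := measurable_fst.prodMk hf
  rw [map_apply hΦ hs, compProd_apply (hΦ hs), prod_apply hs]
  refine lintegral_congr_ae (h.mono fun x hx => ?_)
  dsimp only
  rw [← hx, map_apply (f := fun y => f (x, y)) (hf.comp measurable_prodMk_left)
    (measurable_prodMk_left hs)]
  rfl

namespace ProbabilityTheory

/-- The generalized inverse of `cdf m`, cut off to `0` outside `(0, 1)`, where the infimum is
taken over an empty set or a set unbounded below. -/
noncomputable def quantile (m : Measure ℝ) : ℝ → ℝ :=
  (Ioo 0 1).indicator fun u => sInf {y | u ≤ cdf m y}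

section Quantile

variable {m : Measure ℝ}

theorem quantile_le_iff {u : ℝ} (hu : u ∈ Ioo 0 1) {y : ℝ} :
    quantile m u ≤ y ↔ u ≤ cdf m y := by
  set S := {y | u ≤ cdf m y}
  have hne : S.Nonempty := ((tendsto_cdf_atTop m).eventually (eventually_ge_nhds hu.2)).exists
  have hbdd : BddBelow S := by
    obtain ⟨a, ha⟩ := ((tendsto_cdf_atBot m).eventually (eventually_lt_nhds hu.1)).exists
    exact ⟨a, fun z hz => le_of_not_ge fun hza => (hz.trans (monotone_cdf m hza)).not_gt ha⟩
  -- right-continuity of `cdf m` puts the infimum into `S`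
  have hmem : sInf S ∈ S := by
    refine ge_of_tendsto (((cdf m).right_continuous _).mono Ioi_subset_Ici_self) ?_
    filter_upwards [self_mem_nhdsWithin] with y hy
    obtain ⟨z, hz, hzy⟩ := exists_lt_of_csInf_lt hne hy
    exact hz.trans (monotone_cdf m hzy.le)
  rw [quantile, indicator_of_mem hu]
  exact ⟨fun h => hmem.trans (monotone_cdf m h), fun h => csInf_le hbdd h⟩

theorem measurable_quantile_comp {β : Type*} [MeasurableSpace β] {ν : β → Measure ℝ}
    (hν : ∀ y, Measurable fun b => cdf (ν b) y) {u : β → ℝ} (hu : Measurable u) :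
    Measurable fun b => quantile (ν b) (u b) := by
  refine measurable_of_Iic fun y => ?_
  have hpre : (fun b => quantile (ν b) (u b)) ⁻¹' Iic y =
      (u ⁻¹' Ioo 0 1 ∩ {b | u b ≤ cdf (ν b) y}) ∪ (u ⁻¹' (Ioo 0 1)ᶜ ∩ {_b | 0 ≤ y}) := by
    ext b
    by_cases hb : u b ∈ Ioo 0 1
    · simp [hb, quantile_le_iff hb]
    · simp [hb, quantile]
  rw [hpre]
  exact ((measurableSet_Ioo.preimage hu).inter (measurableSet_le hu (hν y))).union
    ((measurableSet_Ioo.compl.preimage hu).inter (MeasurableSet.const _))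

theorem measurable_quantile : Measurable (quantile m) :=
  measurable_quantile_comp (ν := fun _ => m) (fun _ => measurable_const) measurable_id

/-- Inverse transform sampling. -/
theorem map_quantile_volume_restrict_Icc [IsProbabilityMeasure m] :
    (volume.restrict (Icc 0 1)).map (quantile m) = m := by
  refine Measure.ext_of_Iic _ _ fun y => ?_
  have hpre : quantile m ⁻¹' Iic y ∩ Ioo 0 1 = Iic (cdf m y) ∩ Ioo 0 1 := by
    ext u
    exact and_congr_left fun hu => quantile_le_iff hu
  rw [Measure.map_apply measurable_quantile measurableSet_Iic,
    ← Measure.restrict_congr_set Ioo_ae_eq_Icc,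
    Measure.restrict_apply (measurable_quantile measurableSet_Iic), hpre,
    ← Measure.restrict_apply measurableSet_Iic, Measure.restrict_congr_set Ioo_ae_eq_Icc,
    Real.volume_restrict_Icc_Iic ⟨cdf_nonneg m y, cdf_le_one m y⟩, sub_zero, ofReal_cdf]

variable [IsProbabilityMeasure m]

theorem continuous_cdf_of_forall_measure_singleton (hm : ∀ y, m {y} = 0) :
    Continuous (cdf m) := by
  refine continuous_iff_continuousAt.2 fun y => ?_
  rw [(monotone_cdf m).continuousAt_iff_leftLim_eq_rightLim, (cdf m).rightLim_eq]
  have hjump := (cdf m).measure_singleton y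
  rw [measure_cdf, hm y, eq_comm, ENNReal.ofReal_eq_zero] at hjump
  exact le_antisymm ((monotone_cdf m).leftLim_le le_rfl) (sub_nonpos.1 hjump)

theorem cdf_quantile (hm : ∀ y, m {y} = 0) {u : ℝ} (hu : u ∈ Ioo 0 1) :
    cdf m (quantile m u) = u := by
  refine le_antisymm ?_ ((quantile_le_iff hu).1 le_rfl)
  refine le_of_tendsto (x := 𝓝[<] quantile m u)
    (((continuous_cdf_of_forall_measure_singleton hm).tendsto _).mono_left nhdsWithin_le_nhds) ?_
  filter_upwards [self_mem_nhdsWithin] with y (hy : y < quantile m u)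
  exact le_of_not_ge fun h => hy.not_ge ((quantile_le_iff hu).2 h)

theorem ae_quantile_cdf (hm : ∀ y, m {y} = 0) : ∀ᵐ y ∂m, quantile m (cdf m y) = y := by
  have hmeas : MeasurableSet {y | quantile m (cdf m y) = y} :=
    measurableSet_eq_fun (measurable_quantile.comp (monotone_cdf m).measurable) measurable_id
  have h := (ae_map_iff measurable_quantile.aemeasurable hmeas).2 <|
    Real.ae_mem_Ioo_volume_restrict_Icc.mono fun u hu => by rw [cdf_quantile hm hu]
  rwa [map_quantile_volume_restrict_Icc] at h

/-- The probability integral transform. -/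
theorem map_cdf (hm : ∀ y, m {y} = 0) : m.map (cdf m) = volume.restrict (Icc 0 1) := calc
  m.map (cdf m) = ((volume.restrict (Icc 0 1)).map (quantile m)).map (cdf m) := by
    rw [map_quantile_volume_restrict_Icc]
  _ = (volume.restrict (Icc 0 1)).map (cdf m ∘ quantile m) :=
    Measure.map_map (monotone_cdf m).measurable measurable_quantile
  _ = (volume.restrict (Icc 0 1)).map id :=
    Measure.map_congr <| Real.ae_mem_Ioo_volume_restrict_Icc.mono fun u hu => cdf_quantile hm hu
  _ = volume.restrict (Icc 0 1) := Measure.map_id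

end Quantile

section Kernel

variable {α : Type*} [MeasurableSpace α]

theorem measurable_kernel_Iic (κ : Kernel α ℝ) [IsSFiniteKernel κ] :
    Measurable fun p : α × ℝ => κ p.1 (Iic p.2) :=
  Kernel.measurable_kernel_prodMk_left (κ := Kernel.prodMkRight ℝ κ)
    (t := {q : (α × ℝ) × ℝ | q.2 ≤ q.1.2}) (measurableSet_le measurable_snd measurable_fst.snd)

-- `Measure.real` rather than `cdf`, so that this is definitionally the map of the theorem.
noncomputable def fiberCDF (κ : Kernel α ℝ) (p : α × ℝ) : α × ℝ := (p.1, (κ p.1).real (Iic p.2))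

noncomputable def fiberQuantile (κ : Kernel α ℝ) (p : α × ℝ) : α × ℝ :=
  (p.1, quantile (κ p.1) p.2)

theorem measurable_fiberCDF (κ : Kernel α ℝ) [IsSFiniteKernel κ] : Measurable (fiberCDF κ) :=
  measurable_fst.prodMk (measurable_kernel_Iic κ).ennreal_toReal

variable {κ : Kernel α ℝ} [IsMarkovKernel κ]

theorem measurable_fiberQuantile : Measurable (fiberQuantile κ) := by
  refine measurable_fst.prodMk (measurable_quantile_comp (fun y => ?_) measurable_snd)
  simp_rw [cdf_eq_real, measureReal_def]
  exact ((κ.measurable_coe measurableSet_Iic).comp measurable_fst).ennreal_toReal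

theorem map_fiberCDF_compProd {ρ : Measure α} [SFinite ρ] (hκ : ∀ᵐ x ∂ρ, ∀ y, κ x {y} = 0) :
    (ρ ⊗ₘ κ).map (fiberCDF κ) = ρ.prod (volume.restrict (Icc 0 1)) :=
  Measure.map_compProd_prodMk_of_ae_map_eq (measurable_kernel_Iic κ).ennreal_toReal <|
    hκ.mono fun x hx => by simpa only [← cdf_eq_real] using map_cdf hx

theorem ae_fiberQuantile_fiberCDF {ρ : Measure α} [SFinite ρ]
    (hκ : ∀ᵐ x ∂ρ, ∀ y, κ x {y} = 0) :
    ∀ᵐ p ∂(ρ ⊗ₘ κ), fiberQuantile κ (fiberCDF κ p) = p := by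
  suffices h : ∀ᵐ p ∂(ρ ⊗ₘ κ), (fiberQuantile κ (fiberCDF κ p)).2 = p.2 from
    h.mono fun p hp => Prod.ext rfl hp
  rw [Measure.ae_compProd_iff (measurableSet_eq_fun
    (f := fun p => (fiberQuantile κ (fiberCDF κ p)).2)
    (measurable_fiberQuantile.comp (measurable_fiberCDF κ)).snd measurable_snd)]
  filter_upwards [hκ] with x hx
  filter_upwards [ae_quantile_cdf hx] with y hy
  simpa only [fiberQuantile, fiberCDF, ← cdf_eq_real] using hy

theorem ae_fiberCDF_fiberQuantile {ρ : Measure α} (hκ : ∀ᵐ x ∂ρ, ∀ y, κ x {y} = 0) :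
    ∀ᵐ p ∂ρ.prod (volume.restrict (Icc 0 1)), fiberCDF κ (fiberQuantile κ p) = p := by
  suffices h : ∀ᵐ p ∂ρ.prod (volume.restrict (Icc 0 1)),
      (fiberCDF κ (fiberQuantile κ p)).2 = p.2 from h.mono fun p hp => Prod.ext rfl hp
  refine (Measure.ae_prod_mem_iff_ae_ae_mem (measurableSet_eq_fun
    (f := fun p => (fiberCDF κ (fiberQuantile κ p)).2)
    ((measurable_fiberCDF κ).comp measurable_fiberQuantile).snd measurable_snd)).2 ?_
  filter_upwards [hκ] with x hx
  filter_upwards [Real.ae_mem_Ioo_volume_restrict_Icc] with u hu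
  simpa only [fiberQuantile, fiberCDF, ← cdf_eq_real] using cdf_quantile hx hu

end Kernel

end ProbabilityTheory

/-- Let `μ` be a Borel probability measure on `ℝ × ℝ`, `μ₁ = μ.fst` its
first marginal, and `ν = μ.condKernel` its disintegration kernel, assumed atomless for
`μ₁`-a.e. `x`.  Define `F(x, y) = ν x ((−∞, y])` and `Φ(x, y) = (x, F(x, y))`.  Then `Φ` is
Borel measurable, `Φ_* μ = μ₁ × Leb_{[0,1]}`, and there is a Borel `Ψ(x, y) = (x, G(x, y))`
which is a two-sided a.e. inverse of `Φ`. -/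
theorem fiberwise_cdf_pushforward
    (μ : Measure (ℝ × ℝ)) [IsProbabilityMeasure μ]
    (hatomless : ∀ᵐ x ∂μ.fst, ∀ y : ℝ, μ.condKernel x {y} = 0) :
    Measurable (fun p : ℝ × ℝ => ((p.1, (μ.condKernel p.1 (Set.Iic p.2)).toReal) : ℝ × ℝ)) ∧
    Measure.map (fun p : ℝ × ℝ => ((p.1, (μ.condKernel p.1 (Set.Iic p.2)).toReal) : ℝ × ℝ)) μ
      = μ.fst.prod (volume.restrict (Set.Icc (0:ℝ) 1)) ∧
    ∃ G : ℝ × ℝ → ℝ,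
      Measurable (fun p : ℝ × ℝ => ((p.1, G p) : ℝ × ℝ)) ∧
      (∀ᵐ p ∂μ,
        (((p.1, (μ.condKernel p.1 (Set.Iic p.2)).toReal) : ℝ × ℝ).1,
          G ((p.1, (μ.condKernel p.1 (Set.Iic p.2)).toReal) : ℝ × ℝ)) = p) ∧
      (∀ᵐ p ∂(μ.fst.prod (volume.restrict (Set.Icc (0:ℝ) 1))),
        ((((p.1, G p) : ℝ × ℝ).1,
          (μ.condKernel ((p.1, G p) : ℝ × ℝ).1 (Set.Iic (((p.1, G p) : ℝ × ℝ).2))).toReal)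
            : ℝ × ℝ) = p) := by
  have hμ : μ.fst ⊗ₘ μ.condKernel = μ := μ.disintegrate μ.condKernel
  have hmap := map_fiberCDF_compProd hatomless
  have hleft := ae_fiberQuantile_fiberCDF hatomless
  rw [hμ] at hmap hleft
  exact ⟨measurable_fiberCDF μ.condKernel, hmap, fun p => quantile (μ.condKernel p.1) p.2,
    measurable_fiberQuantile, hleft, ae_fiberCDF_fiberQuantile hatomless⟩
end

section
/- Let λ denote Lebesgue measure on [0,1] and let X : [0,1] → [0,1] be Borel measurable. Suppose there exists a sequence of Borel measurable functions Z_n : [0,1] → ℝ taking values in {−1, 1} such that for every Borel measurable W : [0,1] → [0,1], ‖E[Z_n · W | σ(X)]‖_{L²(λ)} → 0 as n → ∞. Then for μ_X-a.e. x, the measure ν(x) is atomless. -/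
open MeasureTheory ProbabilityTheory Filter
open scoped ENNReal Topology

local notation "I01" => Set.Icc (0:ℝ) 1

open TopologicalSpace

/-!
If `|Z| = 1` and `y ∈ s`, the atom at `y` contributes `ρ{y}` in norm to `∫_s Z dρ` and the rest of
`s` at most `ρ(s) - ρ{y}`, so `2 ρ{y} ≤ ρ(s) + |∫_s Z dρ|`. Since `E[1_s Z_n | σ(X)]` is
`x ↦ ∫_s Z_n dν(x)` composed with `X`, its `L²` decay gives `∫_s Z_n dν(x) → 0` along a subsequence
for `μ_X`-a.e. `x`, hence `2 ν(x){y} ≤ ν(x)(s)` for all `y ∈ s` and all `s` in a countable basis.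
Outer regularity of `ν(x)` lets `s` shrink to `{y}`, which forces `ν(x){y} = 0`.
-/

theorem two_mul_measureReal_singleton_le {α E : Type*} [MeasurableSpace α]
    [MeasurableSingletonClass α] [NormedAddCommGroup E] [NormedSpace ℝ E] [CompleteSpace E]
    (ρ : Measure α) [IsFiniteMeasure ρ] {f : α → E} (hf : AEStronglyMeasurable f ρ)
    (hf_norm : ∀ t, ‖f t‖ = 1) {s : Set α} {y : α} (hy : y ∈ s) :
    2 * ρ.real {y} ≤ ρ.real s + ‖∫ t in s, f t ∂ρ‖ := by
  have hf_int : Integrable f ρ := .of_bound hf 1 (ae_of_all _ fun t => (hf_norm t).le)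
  have h_split := integral_inter_add_sdiff (measurableSet_singleton y) (s := s) hf_int.integrableOn
  rw [Set.inter_eq_right.2 (Set.singleton_subset_iff.2 hy)] at h_split
  have h_atom : ‖∫ t in {y}, f t ∂ρ‖ = ρ.real {y} := by
    rw [integral_singleton, norm_smul, hf_norm, mul_one, Real.norm_of_nonneg measureReal_nonneg]
  have h_rest : ‖∫ t in s \ {y}, f t ∂ρ‖ ≤ ρ.real s - ρ.real {y} := by
    rw [← measureReal_sdiff (Set.singleton_subset_iff.2 hy) (measurableSet_singleton y)]
    simpa using norm_setIntegral_le_of_norm_le_const (C := 1) (measure_lt_top ρ _)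
      fun t _ => (hf_norm t).le
  have h_triangle : ‖∫ t in {y}, f t ∂ρ‖ ≤ ‖∫ t in s, f t ∂ρ‖ + ‖∫ t in s \ {y}, f t ∂ρ‖ := by
    rw [← h_split]
    simpa using norm_sub_le (∫ t in {y}, f t ∂ρ + ∫ t in s \ {y}, f t ∂ρ) (∫ t in s \ {y}, f t ∂ρ)
  linarith

theorem two_mul_measureReal_singleton_le_of_tendsto {α ι E : Type*} [MeasurableSpace α]
    [MeasurableSingletonClass α] [NormedAddCommGroup E] [NormedSpace ℝ E] [CompleteSpace E]
    (ρ : Measure α) [IsFiniteMeasure ρ] {l : Filter ι} [l.NeBot] {f : ι → α → E}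
    (hf : ∀ i, AEStronglyMeasurable (f i) ρ) (hf_norm : ∀ i t, ‖f i t‖ = 1)
    {s : Set α} (h_lim : Tendsto (fun i => ∫ t in s, f i t ∂ρ) l (𝓝 0))
    {y : α} (hy : y ∈ s) : 2 * ρ.real {y} ≤ ρ.real s := by
  simpa using ge_of_tendsto' (h_lim.norm.const_add (ρ.real s))
    fun i => two_mul_measureReal_singleton_le ρ (hf i) (hf_norm i) hy

theorem measure_singleton_eq_zero_of_two_mul_le {α : Type*} [TopologicalSpace α]
    [MeasurableSpace α] (ρ : Measure α) [ρ.OuterRegular] [IsFiniteMeasure ρ]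
    {B : Set (Set α)} (hB : IsTopologicalBasis B) {y : α}
    (h : ∀ s ∈ B, y ∈ s → 2 * ρ.real {y} ≤ ρ.real s) : ρ {y} = 0 := by
  by_contra h_ne
  have h_lt : ρ {y} < 2 * ρ {y} := by
    simpa using ENNReal.mul_lt_mul_left h_ne (measure_ne_top ρ _) (by norm_num : (1 : ℝ≥0∞) < 2)
  obtain ⟨U, hyU, hU, hU_lt⟩ := Set.exists_isOpen_lt_of_lt {y} _ h_lt
  obtain ⟨s, hsB, hys, hsU⟩ := hB.exists_subset_of_mem_open (hyU rfl) hU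
  have h_lt' : ρ.real s < 2 * ρ.real {y} := by
    simpa [measureReal_def, ENNReal.toReal_mul] using (ENNReal.toReal_lt_toReal (measure_ne_top ρ s)
      (ENNReal.mul_ne_top ENNReal.ofNat_ne_top (measure_ne_top ρ _))).2
      ((measure_mono hsU).trans_lt hU_lt)
  exact (h s hsB hys).not_gt h_lt'

theorem eLpNorm_condExp_comap_eq_eLpNorm_integral_condDistrib {Ω β F : Type*} [MeasurableSpace Ω]
    [StandardBorelSpace Ω] [Nonempty Ω] [MeasurableSpace β] [NormedAddCommGroup F]
    [NormedSpace ℝ F] [CompleteSpace F] {μ : Measure Ω} [IsFiniteMeasure μ] {X : Ω → β}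
    (hX : Measurable X) {f : Ω → F} (hf : StronglyMeasurable f) (hf_int : Integrable f μ)
    (p : ℝ≥0∞) :
    eLpNorm (μ[f | MeasurableSpace.comap X inferInstance]) p μ =
      eLpNorm (fun x => ∫ ω, f ω ∂condDistrib id X μ x) p (μ.map X) := by
  rw [eLpNorm_map_measure hf.integral_kernel.aestronglyMeasurable hX.aemeasurable]
  exact eLpNorm_congr_ae (condExp_ae_eq_integral_condDistrib hX aemeasurable_id hf hf_int)

theorem ae_condDistrib_singleton_eq_zero_of_tendsto_condExp {Ω β E : Type*}
    [TopologicalSpace Ω] [PolishSpace Ω] [MeasurableSpace Ω] [BorelSpace Ω] [Nonempty Ω]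
    [MeasurableSpace β] [NormedAddCommGroup E] [NormedSpace ℝ E] [CompleteSpace E]
    {μ : Measure Ω} [IsFiniteMeasure μ] {X : Ω → β} (hX : Measurable X) {Z : ℕ → Ω → E}
    (hZ : ∀ n, StronglyMeasurable (Z n)) (hZ_norm : ∀ n t, ‖Z n t‖ = 1) {p : ℝ≥0∞} (hp : p ≠ 0)
    (h_mix : ∀ s, MeasurableSet s → Tendsto (fun n =>
      eLpNorm (μ[s.indicator (Z n) | MeasurableSpace.comap X inferInstance]) p μ) atTop (𝓝 0)) :
    ∀ᵐ x ∂μ.map X, ∀ y, condDistrib id X μ x {y} = 0 := by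
  set ν := condDistrib id X μ
  obtain ⟨B, hB_countable, -, hB⟩ := exists_countable_basis Ω
  have h_atom_bound : ∀ s ∈ B, ∀ᵐ x ∂μ.map X, ∀ y ∈ s, 2 * (ν x).real {y} ≤ (ν x).real s := by
    intro s hsB
    have hs := (hB.isOpen hsB).measurableSet
    have h_meas : ∀ n, StronglyMeasurable (s.indicator (Z n)) := fun n => (hZ n).indicator hs
    have h_int : ∀ n, Integrable (s.indicator (Z n)) μ := fun n =>
      .of_bound (h_meas n).aestronglyMeasurable 1 (ae_of_all _ fun t =>
        (norm_indicator_le_norm_self (Z n) t).trans (hZ_norm n t).le)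
    have h_lim : TendstoInMeasure (μ.map X) (fun n x => ∫ t in s, Z n t ∂ν x) atTop 0 := by
      refine tendstoInMeasure_of_tendsto_eLpNorm hp
        (fun n => ?_) aestronglyMeasurable_zero ?_
      · simpa only [integral_indicator hs] using (h_meas n).integral_kernel.aestronglyMeasurable
      · refine (h_mix s hs).congr fun n => ?_
        rw [sub_zero, eLpNorm_condExp_comap_eq_eLpNorm_integral_condDistrib hX (h_meas n) (h_int n)]
        simp only [integral_indicator hs, ν]
    obtain ⟨ns, -, h_ae⟩ := h_lim.exists_seq_tendsto_ae
    filter_upwards [h_ae] with x hx y hy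
    exact two_mul_measureReal_singleton_le_of_tendsto (ν x)
      (fun n => (hZ (ns n)).aestronglyMeasurable) (fun n => hZ_norm (ns n)) hx hy
  rw [← ae_ball_iff hB_countable] at h_atom_bound
  filter_upwards [h_atom_bound] with x hx y
  exact measure_singleton_eq_zero_of_two_mul_le (ν x) hB fun s hsB hys => hx s hsB y hys

/-- Let `λ` be Lebesgue measure on `[0,1]` (the volume measure on the
subtype `[0,1] ⊆ ℝ`) and `X : [0,1] → [0,1]` Borel measurable.  Let `μ_{X,Y}` be the
pushforward of `λ` under `t ↦ (X t, t)` and `ν = μ_{X,Y}.condKernel`.  If there are Borel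
`Z_n : [0,1] → {−1,1}` such that `‖E[Z_n · W | σ(X)]‖_{L²(λ)} → 0` for every Borel
`W : [0,1] → [0,1]`, then `ν x` is atomless for `μ_X`-a.e. `x`. -/
theorem conditional_mixing_implies_diffuse_fibers
    (X : ↥I01 → ↥I01) (hX : Measurable X)
    (μXY : Measure (↥I01 × ↥I01)) [IsProbabilityMeasure μXY]
    (hμXY : μXY = Measure.map (fun t => (X t, t)) volume)
    (h5 : ∃ Z : ℕ → ↥I01 → ℝ,
      (∀ n, Measurable (Z n)) ∧
      (∀ n t, Z n t = 1 ∨ Z n t = -1) ∧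
      ∀ W : ↥I01 → ↥I01, Measurable W →
        Tendsto (fun n =>
            eLpNorm
              ((volume : Measure ↥I01)[(fun t => Z n t * (W t : ℝ)) |
                MeasurableSpace.comap X inferInstance]) 2 volume)
          atTop (𝓝 0)) :
    ∀ᵐ x ∂(Measure.map X volume), ∀ y : ↥I01, μXY.condKernel x {y} = 0 := by
  obtain ⟨Z, hZ_meas, hZ_sign, hZ_mix⟩ := h5
  have h_kernel : μXY.condKernel = condDistrib id X volume := by
    subst hμXY; rw [condDistrib_def]; rfl
  have hZ_norm : ∀ n t, ‖Z n t‖ = 1 := fun n t => by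
    rcases hZ_sign n t with h | h <;> simp [h]
  rw [h_kernel]
  refine ae_condDistrib_singleton_eq_zero_of_tendsto_condExp hX
    (fun n => (hZ_meas n).stronglyMeasurable) hZ_norm two_ne_zero fun s hs => ?_
  have h_indicator : ∀ n, (fun t => Z n t * ((s.indicator 1 t : I01) : ℝ)) = s.indicator (Z n) := by
    intro n; funext t; by_cases ht : t ∈ s <;> simp [ht]
  simpa only [h_indicator] using hZ_mix (s.indicator 1) (measurable_one.indicator hs)
end

section
/- Let ν be a Borel probability measure on ℝ that is atomless, and let F : ℝ → ℝ be its cumulative distribution function, F(y) = ν((−∞, y]). Then the pushforward of ν under F equals Lebesgue measure restricted to the interval [0,1]. -/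
open MeasureTheory ProbabilityTheory

open Set Filter Topology in
private lemma cdf_cont_aux (ν : Measure ℝ) [IsProbabilityMeasure ν]
    (hν : ∀ y : ℝ, ν {y} = 0) : Continuous (fun y => cdf ν y) := by
  rw [continuous_iff_continuousAt]
  intro x
  have hmono : Monotone (cdf ν) := monotone_cdf ν
  rw [hmono.continuousAt_iff_leftLim_eq_rightLim]
  have hR : Function.rightLim (cdf ν) x = cdf ν x := by
    refine hmono.continuousWithinAt_Ioi_iff_rightLim_eq.mp ?_
    exact ((cdf ν).right_continuous x).mono Ioi_subset_Ici_self
  have hL : Function.leftLim (cdf ν) x = cdf ν x := by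
    have h0 : (cdf ν).measure {x} = 0 := by rw [measure_cdf]; exact hν x
    rw [StieltjesFunction.measure_singleton] at h0
    have h1 : cdf ν x - Function.leftLim (cdf ν) x ≤ 0 := by
      by_contra h
      push_neg at h
      rw [ENNReal.ofReal_eq_zero] at h0
      linarith
    have h2 : Function.leftLim (cdf ν) x ≤ cdf ν x := hmono.leftLim_le le_rfl
    linarith
  rw [hL, hR]

/-- Let `ν` be an atomless Borel probability measure on `ℝ` and let
`F = cdf ν` be its cumulative distribution function, `F y = ν (−∞, y]`.  Then the pushforward
of `ν` under `F` is Lebesgue measure restricted to `[0,1]`. -/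
theorem map_cdf_of_atomless_eq_restrict_Icc
    (ν : Measure ℝ) [IsProbabilityMeasure ν] (hν : ∀ y : ℝ, ν {y} = 0) :
    Measure.map (fun y => cdf ν y) ν = volume.restrict (Set.Icc (0:ℝ) 1) := by
  set F : ℝ → ℝ := fun y => cdf ν y with hF
  have hcont : Continuous F := cdf_cont_aux ν hν
  have hmono : Monotone F := monotone_cdf ν
  have hmeas : Measurable F := hcont.measurable
  have key : ∀ t : ℝ, ν (F ⁻¹' Set.Iic t) = ENNReal.ofReal (min t 1) := by
    intro t
    rcases lt_or_ge t 0 with ht | ht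
    · have : F ⁻¹' Set.Iic t = ∅ := by
        ext y
        simp only [Set.mem_preimage, Set.mem_Iic, Set.mem_empty_iff_false, iff_false, not_le]
        exact lt_of_lt_of_le ht (cdf_nonneg ν y)
      rw [this, measure_empty, Eq.comm, ENNReal.ofReal_eq_zero]
      exact le_of_lt (min_lt_of_left_lt ht)
    rcases le_or_gt 1 t with ht1 | ht1
    · have : F ⁻¹' Set.Iic t = Set.univ := by
        ext y
        simp only [Set.mem_preimage, Set.mem_Iic, Set.mem_univ, iff_true]
        exact le_trans (cdf_le_one ν y) ht1
      rw [this, measure_univ, min_eq_right ht1, ENNReal.ofReal_one]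
    · -- 0 ≤ t < 1
      rw [min_eq_left ht1.le]
      set S := F ⁻¹' Set.Iic t with hS
      rcases S.eq_empty_or_nonempty with hSe | hSne
      · rw [hSe, measure_empty, Eq.comm, ENNReal.ofReal_eq_zero]
        -- t must be ≤ 0
        by_contra h
        push_neg at h
        have := (tendsto_cdf_atBot ν).eventually (eventually_lt_nhds h)
        obtain ⟨y, hy⟩ := this.exists
        exact (Set.eq_empty_iff_forall_notMem.mp hSe y) (le_of_lt hy)
      · have hbdd : BddAbove S := by
          obtain ⟨y₀, hy₀⟩ :=
            ((tendsto_cdf_atTop ν).eventually (eventually_gt_nhds ht1)).exists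
          refine ⟨y₀, fun y hy => ?_⟩
          by_contra h
          push_neg at h
          exact absurd (le_trans (hmono h.le) hy) (not_le.mpr hy₀)
        have hSclosed : IsClosed S := IsClosed.preimage hcont isClosed_Iic
        set a := sSup S with ha
        have haS : a ∈ S := hSclosed.csSup_mem hSne hbdd
        have hFa : F a ≤ t := haS
        have hSIic : S = Set.Iic a := by
          ext y
          constructor
          · exact fun hy => le_csSup hbdd hy
          · exact fun hy => le_trans (hmono hy) hFa
        have hFat : F a = t := by
          refine le_antisymm hFa ?_
          by_contra h
          push_neg at h
          have : ∀ᶠ y in nhds a, F y < t := (hcont.continuousAt).eventually_lt continuousAt_const h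
          obtain ⟨ε, hε, hball⟩ := Metric.eventually_nhds_iff.mp this
          have hmem : a + ε / 2 ∈ S := by
            refine le_of_lt (hball ?_)
            simp [abs_of_nonneg, hε.le, half_lt_self hε, abs_of_pos, half_pos hε]
          have := le_csSup hbdd hmem
          linarith
        rw [hSIic, ← ofReal_cdf ν a]
        exact congrArg ENNReal.ofReal hFat
  have : IsProbabilityMeasure (Measure.map F ν) := Measure.isProbabilityMeasure_map hmeas.aemeasurable
  refine Measure.ext_of_Iic _ _ (fun t => ?_)
  rw [Measure.map_apply hmeas measurableSet_Iic, key t,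
    Measure.restrict_apply measurableSet_Iic]
  have hset : Set.Iic t ∩ Set.Icc (0:ℝ) 1 = Set.Icc 0 (min t 1) := by
    ext x
    simp only [Set.mem_inter_iff, Set.mem_Iic, Set.mem_Icc, le_min_iff]
    constructor
    · rintro ⟨h1, h2, h3⟩; exact ⟨h2, h1, h3⟩
    · rintro ⟨h1, h2, h3⟩; exact ⟨h2, h1, h3⟩
  rw [hset, Real.volume_Icc, sub_zero]
end
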